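/- arXiv:1706.02074 — 4 statements merged into one kernel-verified Lean document; each statement's English description precedes it below -/
import Mathlib

section
/- Let v₂, v₃ ∈ ℝ and let H(x) = a(x)·v₂ + b₀(x)²·v₃ be the height function of the folded cuspidal edge along its cuspidal edge curve Σ(x) = (x, a(x), b₀(x)²), in the direction (0, v₂, v₃). Then H'(0) = 0 and H''(0) = a''(0)v₂ + 2b₀'(0)²v₃. Moreover, if b₀'(0) ≠ 0, a''(0) ≠ 0, (v₂, v₃) ≠ (0,0) and H''(0) = 0, then H'''(0) ≠ 0 if and only if 3a''(0)b₀''(0) − a'''(0)b₀'(0) ≠ 0 (i.e. if and only if the torsion τ_Σ(0) of Σ is nonzero). In other words, H has an A₁ singularity at 0 exactly when the plane orthogonal to (0,v₂,v₃) is not the osculating plane of Σ, and an A₂ singularity when it is the osculating plane and τ_Σ(0) ≠ 0. -/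
/-!
Along the cuspidal edge `H = v₂ a + v₃ b₀²`, and since `b₀(0) = 0` the Leibniz rule gives
`(b₀²)'(0) = 0`, `(b₀²)''(0) = 2 b₀'(0)²` and `(b₀²)'''(0) = 6 b₀'(0) b₀''(0)`. When
`H''(0) = 0`, i.e. `a''(0) v₂ = -2 b₀'(0)² v₃`, this forces `v₃ ≠ 0` and
`a''(0) H'''(0) = 2 b₀'(0) v₃ (3 a''(0) b₀''(0) - a'''(0) b₀'(0))`.
-/

open Real Set

noncomputable def cross3 (a b : Fin 3 → ℝ) : Fin 3 → ℝ :=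
  ![a 1 * b 2 - a 2 * b 1, a 2 * b 0 - a 0 * b 2, a 0 * b 1 - a 1 * b 0]

noncomputable def det3 (a b c : Fin 3 → ℝ) : ℝ :=
  Matrix.det (Matrix.of ![a, b, c])

noncomputable def norm3 (a : Fin 3 → ℝ) : ℝ :=
  Real.sqrt (a 0 ^ 2 + a 1 ^ 2 + a 2 ^ 2)

noncomputable def dot3 (a b : Fin 3 → ℝ) : ℝ :=
  a 0 * b 0 + a 1 * b 1 + a 2 * b 2

open Finset

section

variable {𝕜 : Type*} [NontriviallyNormedField 𝕜] {n : ℕ} {f : 𝕜 → 𝕜} {x : 𝕜}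

theorem iteratedDeriv_fun_sq (hf : ContDiffAt 𝕜 n f x) :
    iteratedDeriv n (fun y => f y ^ 2) x = ∑ i ∈ range (n + 1),
      n.choose i * iteratedDeriv i f x * iteratedDeriv (n - i) f x := by
  simp only [sq]
  exact iteratedDeriv_fun_mul hf hf

theorem deriv_fun_sq_of_apply_eq_zero (hf : ContDiffAt 𝕜 1 f x) (h0 : f x = 0) :
    deriv (fun y => f y ^ 2) x = 0 := by
  simp [← iteratedDeriv_one, iteratedDeriv_fun_sq hf, sum_range_succ, h0]

theorem iteratedDeriv_two_fun_sq_of_apply_eq_zero (hf : ContDiffAt 𝕜 2 f x) (h0 : f x = 0) :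
    iteratedDeriv 2 (fun y => f y ^ 2) x = 2 * deriv f x ^ 2 := by
  simp [iteratedDeriv_fun_sq hf, sum_range_succ, h0]
  ring

theorem iteratedDeriv_three_fun_sq_of_apply_eq_zero (hf : ContDiffAt 𝕜 3 f x) (h0 : f x = 0) :
    iteratedDeriv 3 (fun y => f y ^ 2) x = 6 * deriv f x * iteratedDeriv 2 f x := by
  simp [iteratedDeriv_fun_sq hf, sum_range_succ, h0]
  ring

theorem iteratedDeriv_height {a b : 𝕜 → 𝕜} (ha : ContDiffAt 𝕜 n a x)
    (hb : ContDiffAt 𝕜 n b x) (v₂ v₃ : 𝕜) :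
    iteratedDeriv n (fun y => a y * v₂ + b y ^ 2 * v₃) x =
      iteratedDeriv n a x * v₂ + iteratedDeriv n (fun y => b y ^ 2) x * v₃ := by
  rw [iteratedDeriv_fun_add (ha.mul contDiffAt_const) ((hb.pow 2).mul contDiffAt_const),
    iteratedDeriv_mul_const_field, iteratedDeriv_mul_const_field]

end

theorem height_third_ne_zero_iff {K : Type*} [Field K] [NeZero (2 : K)] {A₂ A₃ B₁ B₂ v₂ v₃ : K}
    (hA₂ : A₂ ≠ 0) (hB₁ : B₁ ≠ 0) (hv : (v₂, v₃) ≠ (0, 0)) (h₂ : A₂ * v₂ + 2 * B₁ ^ 2 * v₃ = 0) :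
    A₃ * v₂ + 6 * B₁ * B₂ * v₃ ≠ 0 ↔ 3 * A₂ * B₂ - A₃ * B₁ ≠ 0 := by
  have hv₃ : v₃ ≠ 0 := by
    rintro rfl
    have hv₂ : v₂ = 0 := by simpa [hA₂] using h₂
    exact hv (by rw [hv₂])
  have key : A₂ * (A₃ * v₂ + 6 * B₁ * B₂ * v₃) = 2 * B₁ * v₃ * (3 * A₂ * B₂ - A₃ * B₁) := by
    linear_combination A₃ * h₂
  rw [← mul_ne_zero_iff_left hA₂, key, mul_ne_zero_iff_left (by simp [two_ne_zero, hB₁, hv₃])]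

theorem stmt13_general (a b₀ : ℝ → ℝ)
    (ha : ContDiff ℝ (⊤ : ℕ∞) a) (hb₀ : ContDiff ℝ (⊤ : ℕ∞) b₀)
    (ha0' : deriv a 0 = 0) (hb₀0 : b₀ 0 = 0)
    (v₂ v₃ : ℝ) (H : ℝ → ℝ) (hH : ∀ x, H x = a x * v₂ + b₀ x ^ 2 * v₃) :
    deriv H 0 = 0 ∧
    iteratedDeriv 2 H 0 = iteratedDeriv 2 a 0 * v₂ + 2 * deriv b₀ 0 ^ 2 * v₃ ∧
    (deriv b₀ 0 ≠ 0 → iteratedDeriv 2 a 0 ≠ 0 → (v₂, v₃) ≠ (0, 0) →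
      iteratedDeriv 2 H 0 = 0 →
      (iteratedDeriv 3 H 0 ≠ 0 ↔
        3 * iteratedDeriv 2 a 0 * iteratedDeriv 2 b₀ 0 -
          iteratedDeriv 3 a 0 * deriv b₀ 0 ≠ 0)) := by
  obtain rfl : H = fun x => a x * v₂ + b₀ x ^ 2 * v₃ := funext hH
  have smooth {f : ℝ → ℝ} (hf : ContDiff ℝ (⊤ : ℕ∞) f) (n : ℕ) : ContDiffAt ℝ n f 0 :=
    (hf.of_le (by exact_mod_cast le_top)).contDiffAt
  have H₁ : deriv (fun x => a x * v₂ + b₀ x ^ 2 * v₃) 0 = 0 := by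
    rw [← iteratedDeriv_one, iteratedDeriv_height (smooth ha 1) (smooth hb₀ 1), iteratedDeriv_one,
      iteratedDeriv_one, deriv_fun_sq_of_apply_eq_zero (smooth hb₀ 1) hb₀0, ha0']
    ring
  have H₂ : iteratedDeriv 2 (fun x => a x * v₂ + b₀ x ^ 2 * v₃) 0 =
      iteratedDeriv 2 a 0 * v₂ + 2 * deriv b₀ 0 ^ 2 * v₃ := by
    rw [iteratedDeriv_height (smooth ha 2) (smooth hb₀ 2),
      iteratedDeriv_two_fun_sq_of_apply_eq_zero (smooth hb₀ 2) hb₀0]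
  have H₃ : iteratedDeriv 3 (fun x => a x * v₂ + b₀ x ^ 2 * v₃) 0 =
      iteratedDeriv 3 a 0 * v₂ + 6 * deriv b₀ 0 * iteratedDeriv 2 b₀ 0 * v₃ := by
    rw [iteratedDeriv_height (smooth ha 3) (smooth hb₀ 3),
      iteratedDeriv_three_fun_sq_of_apply_eq_zero (smooth hb₀ 3) hb₀0]
  refine ⟨H₁, H₂, fun hb₁ ha₂ hv h₂ => ?_⟩
  rw [H₃]
  exact height_third_ne_zero_iff ha₂ hb₁ hv (H₂ ▸ h₂)

/-- Let `H(x) = a(x)v₂ + b₀(x)²v₃` be the height function of the folded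
cuspidal edge along its cuspidal edge curve `Σ(x) = (x, a(x), b₀(x)²)` in the
direction `(0, v₂, v₃)`. Then `H'(0) = 0` and `H''(0) = a''(0)v₂ + 2b₀'(0)²v₃`;
moreover if `b₀'(0) ≠ 0`, `a''(0) ≠ 0`, `(v₂,v₃) ≠ (0,0)` and `H''(0) = 0`, then
`H'''(0) ≠ 0 ↔ 3a''(0)b₀''(0) − a'''(0)b₀'(0) ≠ 0` (i.e. iff `τ_Σ(0) ≠ 0`): `H` has an
`A₁` singularity exactly when the plane is not the osculating plane of `Σ`, and an
`A₂` singularity when it is the osculating plane and `τ_Σ(0) ≠ 0`. -/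
theorem stmt13 (a b₀ : ℝ → ℝ)
    (ha : ContDiff ℝ (⊤ : ℕ∞) a) (hb₀ : ContDiff ℝ (⊤ : ℕ∞) b₀)
    (ha0 : a 0 = 0) (ha0' : deriv a 0 = 0) (hb₀0 : b₀ 0 = 0)
    (v₂ v₃ : ℝ) (H : ℝ → ℝ) (hH : ∀ x, H x = a x * v₂ + b₀ x ^ 2 * v₃) :
    deriv H 0 = 0 ∧
    iteratedDeriv 2 H 0 = iteratedDeriv 2 a 0 * v₂ + 2 * deriv b₀ 0 ^ 2 * v₃ ∧
    (deriv b₀ 0 ≠ 0 → iteratedDeriv 2 a 0 ≠ 0 → (v₂, v₃) ≠ (0, 0) →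
      iteratedDeriv 2 H 0 = 0 →
      (iteratedDeriv 3 H 0 ≠ 0 ↔
        3 * iteratedDeriv 2 a 0 * iteratedDeriv 2 b₀ 0 -
          iteratedDeriv 3 a 0 * deriv b₀ 0 ≠ 0)) :=
  stmt13_general a b₀ ha hb₀ ha0' hb₀0 v₂ v₃ H hH
end

section
/- Assume b₀'(0) ≠ 0, let d : (−ε, ε) → ℝ be a smooth function with d(0) = 0 satisfying b₀(d(y)) + b₁(d(y))·y² + ½(b₃(d(y), y) + b₃(d(y), −y))·y⁴ = 0 for all |y| < ε, and let v = (v₁, v₂, v₃) ∈ ℝ³. Define the height function along the double point curve h(y) = ⟨φ(d(y), y), v⟩. Then h'(0) = h'''(0) = 0 and h''(0) = v₂ − 2b₁(0)v₁/b₀'(0). Moreover, if h''(0) = 0 and v₁ ≠ 0, then h⁽⁴⁾(0) ≠ 0 if and only if 2b₃(0,0)b₀'(0)² − 2b₀'(0)b₁'(0)b₁(0) − 2b₁(0)³a''(0) + b₁(0)²b₀''(0) ≠ 0; i.e. h has an A₃ singularity at 0 exactly when the plane orthogonal to v contains the limiting tangent vector of the double point curve, v₁ ≠ 0, and the singular torsion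 τ_sing of the double point curve is nonzero. -/
/-!
Differentiating the double point equation `b₀(d y) + b₁(d y) y² + C(y) y⁴ = 0`, where `C` is
the even part of `b₃(d y, ·)`, four times at `0` (Faà di Bruno for `b₀ ∘ d`, Leibniz for the
monomial factors) gives `d'(0) = d'''(0) = 0`, `b₀'(0) d''(0) = -2 b₁(0)` and a linear equation
for `d''''(0)`. Along the double point curve the third coordinate of `φ` is the square of
`y³ (b₂(d y) + E(y) y)`, with `E` the odd part, so it does not contribute to the 4-jet of `h`,
and `h` has the 4-jet of `v₁ d + v₂ (a ∘ d + y²/2)`; as `a'(0) = 0` this is `v₁ d` plus `v₂` in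
order two and `3 v₂ a''(0) d''(0)²` in order four. Eliminating `d''(0)`, `d''''(0)` and `v₂`
yields `b₀'(0)³ h''''(0) = -12 v₁ τ`, with `τ` the expression in the statement.
-/

open Real Set

open Filter Topology
open scoped ContDiff

section

variable {𝕜 : Type*} [NontriviallyNormedField 𝕜]

-- For `n < m` both sides vanish (`n.descFactorial m = 0`), so the truncated `n - m` is harmless.
theorem iteratedDeriv_mul_pow_zero {f : 𝕜 → 𝕜} {n : ℕ} (hf : ContDiffAt 𝕜 n f 0) (m : ℕ) :
    iteratedDeriv n (fun y => f y * y ^ m) 0 = n.descFactorial m * iteratedDeriv (n - m) f 0 := by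
  rw [iteratedDeriv_fun_mul hf (by fun_prop : ContDiffAt 𝕜 n (fun y : 𝕜 => y ^ m) 0)]
  simp only [iteratedDeriv_fun_pow_zero]
  rcases le_or_gt m n with hmn | hnm
  · rw [Finset.sum_eq_single (n - m)]
    · rw [if_pos (by omega), Nat.choose_symm hmn, Nat.descFactorial_eq_factorial_mul_choose]
      push_cast
      ring
    · intro i hi hin
      rw [Finset.mem_range] at hi
      rw [if_neg (by omega), Nat.cast_zero, mul_zero]
    · simp
  · rw [Nat.descFactorial_eq_zero_iff_lt.mpr hnm, Nat.cast_zero, zero_mul]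
    refine Finset.sum_eq_zero fun i _ => ?_
    rw [if_neg (by omega), Nat.cast_zero, mul_zero]

theorem deriv_comp_eventuallyEq {g f : 𝕜 → 𝕜} {x : 𝕜} {n : ℕ} (hn : n ≠ 0)
    (hg : ContDiffAt 𝕜 n g (f x)) (hf : ContDiffAt 𝕜 n f x) :
    deriv (g ∘ f) =ᶠ[𝓝 x] (deriv g ∘ f) * deriv f := by
  have hn' : (n : ℕ∞ω) ≠ 0 := by exact_mod_cast hn
  filter_upwards [hf.eventually (by simp),
    hf.continuousAt.tendsto.eventually (hg.eventually (by simp))] with y hfy hgy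
  exact deriv_comp y (hgy.differentiableAt hn') (hfy.differentiableAt hn')

-- Differentiate once, then use Leibniz on `(g' ∘ f) * f'` and the order-three formula for `g' ∘ f`.
theorem iteratedDeriv_comp_four {g f : 𝕜 → 𝕜} {x : 𝕜}
    (hg : ContDiffAt 𝕜 4 g (f x)) (hf : ContDiffAt 𝕜 4 f x) :
    iteratedDeriv 4 (g ∘ f) x =
      iteratedDeriv 4 g (f x) * deriv f x ^ 4 +
      6 * iteratedDeriv 3 g (f x) * iteratedDeriv 2 f x * deriv f x ^ 2 +
      3 * iteratedDeriv 2 g (f x) * iteratedDeriv 2 f x ^ 2 +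
      4 * iteratedDeriv 2 g (f x) * iteratedDeriv 3 f x * deriv f x +
      deriv g (f x) * iteratedDeriv 4 f x := by
  have hg' : ContDiffAt 𝕜 3 (deriv g) (f x) := hg.derivWithin (by norm_num)
  have hf' : ContDiffAt 𝕜 3 (deriv f) x := hf.derivWithin (by norm_num)
  have hf₃ : ContDiffAt 𝕜 3 f x := hf.of_le (by norm_num)
  have hf₂ : ContDiffAt 𝕜 2 f x := hf.of_le (by norm_num)
  rw [iteratedDeriv_succ', (deriv_comp_eventuallyEq four_ne_zero hg hf).iteratedDeriv_eq,
    iteratedDeriv_mul (hg'.comp x hf₃) hf']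
  simp only [Finset.sum_range_succ, Finset.sum_range_zero, iteratedDeriv_zero, iteratedDeriv_one,
    deriv_comp x (hg'.differentiableAt three_ne_zero) (hf.differentiableAt four_ne_zero),
    iteratedDeriv_comp_two (hg'.of_le (by norm_num)) hf₂, iteratedDeriv_comp_three hg' hf₃]
  have hsucc (k : ℕ) (h : 𝕜 → 𝕜) : iteratedDeriv k (deriv h) = iteratedDeriv (k + 1) h :=
    iteratedDeriv_succ'.symm
  have htwo (h : 𝕜 → 𝕜) : deriv (deriv h) = iteratedDeriv 2 h := by
    rw [iteratedDeriv_succ, iteratedDeriv_one]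
  simp only [hsucc, htwo, Function.comp_apply]
  norm_num
  ring

theorem iteratedDeriv_double_point_eq_zero {b₀ b₁ C d : 𝕜 → 𝕜} {n : ℕ}
    (hb₀ : ContDiffAt 𝕜 n b₀ 0) (hb₁ : ContDiffAt 𝕜 n b₁ 0) (hC : ContDiffAt 𝕜 n C 0)
    (hd : ContDiffAt 𝕜 n d 0) (hd0 : d 0 = 0)
    (hF : (fun y => b₀ (d y) + b₁ (d y) * y ^ 2 + C y * y ^ 4) =ᶠ[𝓝 0] 0) :
    iteratedDeriv n (b₀ ∘ d) 0 + n.descFactorial 2 * iteratedDeriv (n - 2) (b₁ ∘ d) 0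
      + n.descFactorial 4 * iteratedDeriv (n - 4) C 0 = 0 := by
  have hb₀d : ContDiffAt 𝕜 n (fun y => b₀ (d y)) 0 := (hd0 ▸ hb₀).comp 0 hd
  have hb₁d : ContDiffAt 𝕜 n (fun y => b₁ (d y)) 0 := (hd0 ▸ hb₁).comp 0 hd
  have hy2 : ContDiffAt 𝕜 n (fun y => b₁ (d y) * y ^ 2) 0 := hb₁d.mul (contDiffAt_id.pow 2)
  have hy4 : ContDiffAt 𝕜 n (fun y => C y * y ^ 4) 0 := hC.mul (contDiffAt_id.pow 4)
  have h := hF.iteratedDeriv_eq n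
  rw [iteratedDeriv_fun_add (hb₀d.add hy2) hy4, iteratedDeriv_fun_add hb₀d hy2,
    iteratedDeriv_mul_pow_zero hb₁d, iteratedDeriv_mul_pow_zero hC] at h
  exact h.trans (by simp)

theorem double_point_jet {b₀ b₁ C d : 𝕜 → 𝕜}
    (hb₀ : ContDiffAt 𝕜 4 b₀ 0) (hb₁ : ContDiffAt 𝕜 4 b₁ 0) (hC : ContDiffAt 𝕜 4 C 0)
    (hd : ContDiffAt 𝕜 4 d 0) (hd0 : d 0 = 0) (hb₀' : deriv b₀ 0 ≠ 0)
    (hF : (fun y => b₀ (d y) + b₁ (d y) * y ^ 2 + C y * y ^ 4) =ᶠ[𝓝 0] 0) :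
    deriv d 0 = 0 ∧ deriv b₀ 0 * iteratedDeriv 2 d 0 + 2 * b₁ 0 = 0 ∧
      iteratedDeriv 3 d 0 = 0 ∧
      3 * iteratedDeriv 2 b₀ 0 * iteratedDeriv 2 d 0 ^ 2 + deriv b₀ 0 * iteratedDeriv 4 d 0
        + 12 * deriv b₁ 0 * iteratedDeriv 2 d 0 + 24 * C 0 = 0 := by
  have hb₀d : ContDiffAt 𝕜 4 b₀ (d 0) := by rwa [hd0]
  have hb₁d : ContDiffAt 𝕜 4 b₁ (d 0) := by rwa [hd0]
  have relation (n : ℕ) (hn : n ≤ 4) := iteratedDeriv_double_point_eq_zero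
    (hb₀.of_le (by exact_mod_cast hn)) (hb₁.of_le (by exact_mod_cast hn))
    (hC.of_le (by exact_mod_cast hn)) (hd.of_le (by exact_mod_cast hn)) hd0 hF
  have hd1 : deriv d 0 = 0 := by
    have h := relation 1 (by norm_num)
    rw [iteratedDeriv_one, deriv_comp 0 (hb₀d.differentiableAt four_ne_zero)
      (hd.differentiableAt four_ne_zero)] at h
    simpa [hd0, hb₀'] using h
  have h2 := relation 2 (by norm_num)
  rw [iteratedDeriv_comp_two (hb₀d.of_le (by norm_num)) (hd.of_le (by norm_num))] at h2
  have h3 := relation 3 (by norm_num)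
  rw [iteratedDeriv_comp_three (hb₀d.of_le (by norm_num)) (hd.of_le (by norm_num)),
    iteratedDeriv_one, deriv_comp 0 (hb₁d.differentiableAt four_ne_zero)
      (hd.differentiableAt four_ne_zero)] at h3
  have h4 := relation 4 le_rfl
  rw [iteratedDeriv_comp_four hb₀d hd,
    iteratedDeriv_comp_two (hb₁d.of_le (by norm_num)) (hd.of_le (by norm_num))] at h4
  norm_num [Nat.descFactorial, hd0, hd1] at h2 h3 h4
  refine ⟨hd1, by linear_combination h2, ?_, by linear_combination h4⟩
  simpa [hb₀'] using h3

theorem height_jet [CharZero 𝕜] {a d G h : 𝕜 → 𝕜} {v₁ v₂ v₃ : 𝕜}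
    (ha : ContDiffAt 𝕜 4 a 0) (hd : ContDiffAt 𝕜 4 d 0) (hG : ContDiffAt 𝕜 4 G 0)
    (hd0 : d 0 = 0) (hd1 : deriv d 0 = 0) (hd3 : iteratedDeriv 3 d 0 = 0)
    (ha1 : deriv a 0 = 0)
    (hh : h =ᶠ[𝓝 0] fun y => v₁ * d y + v₂ * (a (d y) + y ^ 2 / 2) + v₃ * (G y * y ^ 6)) :
    deriv h 0 = 0 ∧ iteratedDeriv 2 h 0 = v₁ * iteratedDeriv 2 d 0 + v₂ ∧
      iteratedDeriv 3 h 0 = 0 ∧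
      iteratedDeriv 4 h 0 =
        v₁ * iteratedDeriv 4 d 0 + 3 * v₂ * iteratedDeriv 2 a 0 * iteratedDeriv 2 d 0 ^ 2 := by
  have had : ContDiffAt 𝕜 4 a (d 0) := by rwa [hd0]
  have jet (n : ℕ) (hn : n ≤ 4) : iteratedDeriv n h 0 = v₁ * iteratedDeriv n d 0 +
      v₂ * (iteratedDeriv n (a ∘ d) 0 + iteratedDeriv n (fun y => y ^ 2 / 2) 0) := by
    have hn' : (n : ℕ∞ω) ≤ 4 := by exact_mod_cast hn
    have hdn : ContDiffAt 𝕜 n d 0 := hd.of_le hn'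
    have hadn : ContDiffAt 𝕜 n (fun y => a (d y)) 0 := (had.of_le hn').comp 0 hdn
    have hsq : ContDiffAt 𝕜 n (fun y : 𝕜 => y ^ 2 / 2) 0 := by fun_prop
    have hG6 : ContDiffAt 𝕜 n (fun y => G y * y ^ 6) 0 :=
      (hG.of_le hn').mul (contDiffAt_id.pow 6)
    have h₁ : ContDiffAt 𝕜 n (fun y => v₁ * d y) 0 := contDiffAt_const.mul hdn
    have h₂ : ContDiffAt 𝕜 n (fun y => v₂ * (a (d y) + y ^ 2 / 2)) 0 :=
      contDiffAt_const.mul (hadn.add hsq)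
    have h₃ : ContDiffAt 𝕜 n (fun y => v₃ * (G y * y ^ 6)) 0 := contDiffAt_const.mul hG6
    rw [hh.iteratedDeriv_eq, iteratedDeriv_fun_add (h₁.add h₂) h₃, iteratedDeriv_fun_add h₁ h₂,
      iteratedDeriv_const_mul_field, iteratedDeriv_const_mul_field, iteratedDeriv_const_mul_field,
      iteratedDeriv_fun_add hadn hsq, iteratedDeriv_mul_pow_zero (hG.of_le hn'),
      Nat.descFactorial_eq_zero_iff_lt.mpr (by omega)]
    simp [Function.comp_def]
  have hd₂ : ContDiffAt 𝕜 2 d 0 := hd.of_le (by norm_num)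
  have hd₃ : ContDiffAt 𝕜 3 d 0 := hd.of_le (by norm_num)
  refine ⟨?_, ?_, ?_, ?_⟩
  · simpa [deriv_comp 0 (had.differentiableAt four_ne_zero) (hd.differentiableAt four_ne_zero),
      hd1] using jet 1 (by norm_num)
  · simpa [iteratedDeriv_comp_two (had.of_le (by norm_num)) hd₂, hd0, hd1, ha1,
      iteratedDeriv_fun_pow_zero] using jet 2 (by norm_num)
  · simpa [iteratedDeriv_comp_three (had.of_le (by norm_num)) hd₃, hd0, hd1, hd3, ha1,
      iteratedDeriv_fun_pow_zero] using jet 3 (by norm_num)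
  · rw [jet 4 le_rfl, iteratedDeriv_comp_four had hd]
    simp [hd0, hd1, ha1]
    ring

end

-- Here `β = b₀'(0)`, `δₖ = d⁽ᵏ⁾(0)`, `c = b₃(0, 0)`; the bracket on the right is the torsion term.
theorem singular_torsion_relation {K : Type*} [CommRing K] {β b₁ b₁' b₀'' a'' c δ₂ δ₄ v₁ v₂ : K}
    (h₂ : β * δ₂ + 2 * b₁ = 0)
    (h₄ : 3 * b₀'' * δ₂ ^ 2 + β * δ₄ + 12 * b₁' * δ₂ + 24 * c = 0)
    (hv : v₁ * δ₂ + v₂ = 0) :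
    β ^ 3 * (v₁ * δ₄ + 3 * v₂ * a'' * δ₂ ^ 2) =
      -12 * v₁ * (2 * c * β ^ 2 - 2 * β * b₁' * b₁ - 2 * b₁ ^ 3 * a'' + b₁ ^ 2 * b₀'') := by
  linear_combination (v₁ * β ^ 2) * h₄ + (3 * a'' * β ^ 3 * δ₂ ^ 2) * hv
    - (v₁ * (3 * a'' * (β ^ 2 * δ₂ ^ 2 - 2 * β * δ₂ * b₁ + 4 * b₁ ^ 2)
      + 3 * b₀'' * (β * δ₂ - 2 * b₁) + 12 * b₁' * β)) * h₂

theorem dot3_eq_of_double_point {a b₀ b₁ b₂ : ℝ → ℝ} {b₃ : ℝ → ℝ → ℝ} {x y : ℝ} (v₁ v₂ v₃ : ℝ)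
    (hxy : b₀ x + b₁ x * y ^ 2 + 1 / 2 * (b₃ x y + b₃ x (-y)) * y ^ 4 = 0) :
    dot3 ![x, a x + y ^ 2 / 2, (b₀ x + b₁ x * y ^ 2 + b₂ x * y ^ 3 + b₃ x y * y ^ 4) ^ 2]
        ![v₁, v₂, v₃] =
      v₁ * x + v₂ * (a x + y ^ 2 / 2) +
        v₃ * ((b₂ x + 1 / 2 * (b₃ x y - b₃ x (-y)) * y) ^ 2 * y ^ 6) := by
  simp only [dot3, Matrix.cons_val_zero, Matrix.cons_val_one, Matrix.cons_val_two,
    Matrix.head_cons, Matrix.tail_cons]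
  linear_combination v₃ * (b₀ x + b₁ x * y ^ 2 + b₂ x * y ^ 3 + b₃ x y * y ^ 4
    + y ^ 3 * (b₂ x + 1 / 2 * (b₃ x y - b₃ x (-y)) * y)) * hxy

theorem stmt14_general (a b₀ b₁ b₂ : ℝ → ℝ) (b₃ : ℝ → ℝ → ℝ)
    (ha : ContDiff ℝ (⊤ : ℕ∞) a) (hb₀ : ContDiff ℝ (⊤ : ℕ∞) b₀)
    (hb₁ : ContDiff ℝ (⊤ : ℕ∞) b₁) (hb₂ : ContDiff ℝ (⊤ : ℕ∞) b₂)
    (hb₃ : ContDiff ℝ (⊤ : ℕ∞) (Function.uncurry b₃))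
    (ha0' : deriv a 0 = 0)
    (hb₀0' : deriv b₀ 0 ≠ 0)
    (ε : ℝ) (hε : 0 < ε) (d : ℝ → ℝ)
    (hd : ContDiffOn ℝ (⊤ : ℕ∞) d (Set.Ioo (-ε) ε)) (hd0 : d 0 = 0)
    (hdeq : ∀ y ∈ Set.Ioo (-ε) ε,
      b₀ (d y) + b₁ (d y) * y ^ 2 +
        (1 / 2) * (b₃ (d y) y + b₃ (d y) (-y)) * y ^ 4 = 0)
    (φ : ℝ → ℝ → Fin 3 → ℝ)
    (hφ : ∀ x y, φ x y =
      ![x, a x + y ^ 2 / 2,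
        (b₀ x + b₁ x * y ^ 2 + b₂ x * y ^ 3 + b₃ x y * y ^ 4) ^ 2])
    (v₁ v₂ v₃ : ℝ) (hgt : ℝ → ℝ)
    (hhgt : ∀ y, hgt y = dot3 (φ (d y) y) ![v₁, v₂, v₃]) :
    deriv hgt 0 = 0 ∧
    iteratedDeriv 3 hgt 0 = 0 ∧
    iteratedDeriv 2 hgt 0 = v₂ - 2 * b₁ 0 * v₁ / deriv b₀ 0 ∧
    (iteratedDeriv 2 hgt 0 = 0 → v₁ ≠ 0 →
      (iteratedDeriv 4 hgt 0 ≠ 0 ↔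
        2 * b₃ 0 0 * deriv b₀ 0 ^ 2 - 2 * deriv b₀ 0 * deriv b₁ 0 * b₁ 0 -
          2 * b₁ 0 ^ 3 * iteratedDeriv 2 a 0 + b₁ 0 ^ 2 * iteratedDeriv 2 b₀ 0 ≠ 0)) := by
  have h4 : (4 : ℕ∞ω) ≤ (⊤ : ℕ∞) := WithTop.coe_le_coe.mpr le_top
  have hI : Ioo (-ε) ε ∈ 𝓝 0 := Ioo_mem_nhds (by linarith) hε
  have hd' : ContDiffAt ℝ 4 d 0 := (hd.contDiffAt hI).of_le h4
  have hb₃d {σ : ℝ → ℝ} (hσ : ContDiffAt ℝ 4 σ 0) :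
      ContDiffAt ℝ 4 (fun y => b₃ (d y) (σ y)) 0 :=
    (hb₃.of_le h4).comp_contDiffAt 0 (hd'.prodMk hσ)
  have hC : ContDiffAt ℝ 4 (fun y => 1 / 2 * (b₃ (d y) y + b₃ (d y) (-y))) 0 :=
    contDiffAt_const.mul ((hb₃d contDiffAt_id).add (hb₃d contDiffAt_id.neg))
  have hG : ContDiffAt ℝ 4 (fun y => (b₂ (d y) + 1 / 2 * (b₃ (d y) y - b₃ (d y) (-y)) * y) ^ 2) 0 :=
    ((hb₂.of_le h4).comp_contDiffAt 0 hd' |>.add ((contDiffAt_const.mul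
      ((hb₃d contDiffAt_id).sub (hb₃d contDiffAt_id.neg))).mul contDiffAt_id)).pow 2
  obtain ⟨hd1, hd2, hd3, hd4⟩ := double_point_jet ((hb₀.of_le h4).contDiffAt)
    ((hb₁.of_le h4).contDiffAt) hC hd' hd0 hb₀0' (by filter_upwards [hI] using hdeq)
  obtain ⟨hh1, hh2, hh3, hh4⟩ := height_jet ((ha.of_le h4).contDiffAt) hd' hG hd0 hd1 hd3 ha0'
    (h := hgt) (v₁ := v₁) (v₂ := v₂) (v₃ := v₃) (by
      filter_upwards [hI] with y hy
      rw [hhgt, hφ, dot3_eq_of_double_point v₁ v₂ v₃ (hdeq y hy)])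
  rw [show 1 / 2 * (b₃ (d 0) 0 + b₃ (d 0) (-0)) = b₃ 0 0 by rw [hd0, neg_zero]; ring] at hd4
  refine ⟨hh1, hh3, ?_, fun h2 hv₁ => ?_⟩
  · rw [hh2]
    field_simp
    linear_combination v₁ * hd2
  rw [hh2] at h2
  rw [← mul_ne_zero_iff_left (pow_ne_zero 3 hb₀0'), hh4, singular_torsion_relation hd2 hd4 h2]
  simp [hv₁]

/-- Let `h(y) = ⟨φ(d(y), y), v⟩` be the height function along the double
point curve of the folded cuspidal edge, in the direction `v = (v₁, v₂, v₃)`. Then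
`h'(0) = h'''(0) = 0`, `h''(0) = v₂ − 2b₁(0)v₁/b₀'(0)`, and if `h''(0) = 0` and
`v₁ ≠ 0` then `h⁗(0) ≠ 0 ↔ 2b₃(0,0)b₀'(0)² − 2b₀'(0)b₁'(0)b₁(0) − 2b₁(0)³a''(0) +
b₁(0)²b₀''(0) ≠ 0`; i.e. `h` has an `A₃` singularity exactly when the plane contains
the limiting tangent vector of the double point curve, `v₁ ≠ 0`, and the singular
torsion of the double point curve is nonzero. -/
theorem stmt14 (a b₀ b₁ b₂ : ℝ → ℝ) (b₃ : ℝ → ℝ → ℝ)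
    (ha : ContDiff ℝ (⊤ : ℕ∞) a) (hb₀ : ContDiff ℝ (⊤ : ℕ∞) b₀)
    (hb₁ : ContDiff ℝ (⊤ : ℕ∞) b₁) (hb₂ : ContDiff ℝ (⊤ : ℕ∞) b₂)
    (hb₃ : ContDiff ℝ (⊤ : ℕ∞) (Function.uncurry b₃))
    (ha0 : a 0 = 0) (ha0' : deriv a 0 = 0) (hb₀0 : b₀ 0 = 0)
    (hb₀0' : deriv b₀ 0 ≠ 0)
    (ε : ℝ) (hε : 0 < ε) (d : ℝ → ℝ)
    (hd : ContDiffOn ℝ (⊤ : ℕ∞) d (Set.Ioo (-ε) ε)) (hd0 : d 0 = 0)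
    (hdeq : ∀ y ∈ Set.Ioo (-ε) ε,
      b₀ (d y) + b₁ (d y) * y ^ 2 +
        (1 / 2) * (b₃ (d y) y + b₃ (d y) (-y)) * y ^ 4 = 0)
    (φ : ℝ → ℝ → Fin 3 → ℝ)
    (hφ : ∀ x y, φ x y =
      ![x, a x + y ^ 2 / 2,
        (b₀ x + b₁ x * y ^ 2 + b₂ x * y ^ 3 + b₃ x y * y ^ 4) ^ 2])
    (v₁ v₂ v₃ : ℝ) (hgt : ℝ → ℝ)
    (hhgt : ∀ y, hgt y = dot3 (φ (d y) y) ![v₁, v₂, v₃]) :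
    deriv hgt 0 = 0 ∧
    iteratedDeriv 3 hgt 0 = 0 ∧
    iteratedDeriv 2 hgt 0 = v₂ - 2 * b₁ 0 * v₁ / deriv b₀ 0 ∧
    (iteratedDeriv 2 hgt 0 = 0 → v₁ ≠ 0 →
      (iteratedDeriv 4 hgt 0 ≠ 0 ↔
        2 * b₃ 0 0 * deriv b₀ 0 ^ 2 - 2 * deriv b₀ 0 * deriv b₁ 0 * b₁ 0 -
          2 * b₁ 0 ^ 3 * iteratedDeriv 2 a 0 + b₁ 0 ^ 2 * iteratedDeriv 2 b₀ 0 ≠ 0)) :=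
  stmt14_general a b₀ b₁ b₂ b₃ ha hb₀ hb₁ hb₂ hb₃ ha0' hb₀0' ε hε d hd hd0 hdeq φ hφ v₁ v₂ v₃ hgt
    hhgt
end

section
/- Fix b, c ∈ ℝ and define F : ℝ² × ℝ² → ℝ by F(x, y, a₁, a₂) = x² + b·xy² + xy³ + c·y⁴ + a₁x + a₂y². Then the discriminant set { (a₁, a₂, t) ∈ ℝ³ : there exist x, y ∈ ℝ with ∂F/∂x (x,y,a₁,a₂) = 0, ∂F/∂y (x,y,a₁,a₂) = 0 and t = F(x,y,a₁,a₂) } equals the union of the two parametrised sets { (−y³ − 2x − by², −(3/2)xy − bx − 2cy², −(3/2)xy³ − x² − bxy² − cy⁴) : x, y ∈ ℝ } and { (−2x, s, −x²) : x, s ∈ ℝ }. -/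
/-!
At a critical point of `F(·, ·, a₁, a₂)` the equation `F_x = 0` solves for `a₁`, while
`F_y = y (2bx + 3xy + 4cy² + 2a₂)` vanishes either because `y = 0` or because the bracket does,
which solves for `a₂`. Substituting into `F` gives the plane `{(-2x, s, -x²)}` in the first case
and the cuspidal cross-cap in the second; conversely each parameter point is a critical value.
-/

section CuspidalCrossCapContact

variable (b c a₁ a₂ x y : ℝ)

theorem deriv_cuspidalContact_fst :
    deriv (fun x' => x' ^ 2 + b * x' * y ^ 2 + x' * y ^ 3 + c * y ^ 4 + a₁ * x' + a₂ * y ^ 2) x =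
      2 * x + b * y ^ 2 + y ^ 3 + a₁ := by
  have hx := hasDerivAt_id' x
  refine HasDerivAt.deriv <| (((((hasDerivAt_pow 2 x).add ((hx.const_mul b).mul_const (y ^ 2))).add
    (hx.mul_const (y ^ 3))).add_const (c * y ^ 4)).add (hx.const_mul a₁) |>.add_const
      (a₂ * y ^ 2)).congr_deriv ?_
  norm_num

theorem deriv_cuspidalContact_snd :
    deriv (fun y' => x ^ 2 + b * x * y' ^ 2 + x * y' ^ 3 + c * y' ^ 4 + a₁ * x + a₂ * y' ^ 2) y =
      y * (2 * b * x + 3 * x * y + 4 * c * y ^ 2 + 2 * a₂) := by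
  refine HasDerivAt.deriv <| ((((((hasDerivAt_pow 2 y).const_mul (b * x)).const_add (x ^ 2)).add
    ((hasDerivAt_pow 3 y).const_mul x)).add ((hasDerivAt_pow 4 y).const_mul c)).add_const
      (a₁ * x) |>.add ((hasDerivAt_pow 2 y).const_mul a₂)).congr_deriv ?_
  norm_num
  ring

end CuspidalCrossCapContact

/-- For fixed `b, c ∈ ℝ` and
`F(x,y,a₁,a₂) = x² + bxy² + xy³ + cy⁴ + a₁x + a₂y²` (the versal deformation of the
contact of the cuspidal cross-cap with its tangent cone, composed with the
parametrisation `(x,y) ↦ (x, y², xy³)`), the discriminant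
`{(a₁,a₂,t) : ∃ x y, F_x = F_y = 0, t = F(x,y,a₁,a₂)}` is the union of the cuspidal
cross-cap `{(−y³−2x−by², −(3/2)xy−bx−2cy², −(3/2)xy³−x²−bxy²−cy⁴)}` and the plane
`{(−2x, s, −x²)}`. -/
theorem stmt17 (b c : ℝ) (F : ℝ → ℝ → ℝ → ℝ → ℝ)
    (hF : ∀ x y a₁ a₂, F x y a₁ a₂ =
      x ^ 2 + b * x * y ^ 2 + x * y ^ 3 + c * y ^ 4 + a₁ * x + a₂ * y ^ 2) :
    {p : ℝ × ℝ × ℝ | ∃ x y : ℝ,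
        deriv (fun x' => F x' y p.1 p.2.1) x = 0 ∧
        deriv (fun y' => F x y' p.1 p.2.1) y = 0 ∧
        p.2.2 = F x y p.1 p.2.1} =
      {p : ℝ × ℝ × ℝ | ∃ x y : ℝ,
          p = (-y ^ 3 - 2 * x - b * y ^ 2,
               -(3 / 2) * x * y - b * x - 2 * c * y ^ 2,
               -(3 / 2) * x * y ^ 3 - x ^ 2 - b * x * y ^ 2 - c * y ^ 4)} ∪
      {p : ℝ × ℝ × ℝ | ∃ x s : ℝ, p = (-2 * x, s, -x ^ 2)} := by
  obtain rfl : F = fun x y a₁ a₂ =>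
      x ^ 2 + b * x * y ^ 2 + x * y ^ 3 + c * y ^ 4 + a₁ * x + a₂ * y ^ 2 := by
    funext x y a₁ a₂; exact hF x y a₁ a₂
  ext ⟨a₁, a₂, t⟩
  simp only [Set.mem_ofPred_eq, Set.mem_union, deriv_cuspidalContact_fst,
    deriv_cuspidalContact_snd, Prod.mk.injEq]
  constructor
  · rintro ⟨x, y, hx, hy, rfl⟩
    rcases mul_eq_zero.1 hy with rfl | hbracket
    · obtain rfl : a₁ = -2 * x := by linarith
      exact .inr ⟨x, a₂, rfl, rfl, by ring⟩
    · have ha₁ : a₁ = -y ^ 3 - 2 * x - b * y ^ 2 := by linarith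
      have ha₂ : a₂ = -(3 / 2) * x * y - b * x - 2 * c * y ^ 2 := by linarith
      exact .inl ⟨x, y, ha₁, ha₂, by rw [ha₁, ha₂]; ring⟩
  · rintro (⟨x, y, rfl, rfl, rfl⟩ | ⟨x, s, rfl, rfl, rfl⟩)
    · exact ⟨x, y, by ring, by ring, by ring⟩
    · exact ⟨x, 0, by ring, by ring, by ring⟩
end

section
/- Define H : ℝ × ℝ² → ℝ by H(y, a₁, a₂) = y⁶ + a₁y² + a₂y⁴. Then the set { (a₁, a₂, t) ∈ ℝ³ : there exists y ∈ ℝ with ∂H/∂y (y, a₁, a₂) = 0 and t = H(y, a₁, a₂) } equals the union of the plane { (a₁, a₂, 0) : a₁, a₂ ∈ ℝ } and the parametrised set { (−3y⁴ − 2a₂y², a₂, −2y⁶ − a₂y⁴) : y, a₂ ∈ ℝ }. -/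
lemma hasDerivAt_sextic (a b y : ℝ) :
    HasDerivAt (fun y' : ℝ => y' ^ 6 + a * y' ^ 2 + b * y' ^ 4)
      (2 * y * (3 * y ^ 4 + 2 * b * y ^ 2 + a)) y := by
  refine (((hasDerivAt_pow 6 y).add ((hasDerivAt_pow 2 y).const_mul a)).add
    ((hasDerivAt_pow 4 y).const_mul b)).congr_deriv ?_
  ring

lemma deriv_sextic_eq_zero_iff (a b y : ℝ) :
    deriv (fun y' : ℝ => y' ^ 6 + a * y' ^ 2 + b * y' ^ 4) y = 0 ↔
      y = 0 ∨ a = -3 * y ^ 4 - 2 * b * y ^ 2 := by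
  rw [(hasDerivAt_sextic a b y).deriv, mul_eq_zero, mul_eq_zero]
  constructor
  · rintro ((h | h) | h)
    · norm_num at h
    · exact .inl h
    · exact .inr (by linarith)
  · rintro (h | h)
    · exact .inl (.inr h)
    · exact .inr (by rw [h]; ring)

/-- For `H(y, a₁, a₂) = y⁶ + a₁y² + a₂y⁴` (the restriction to the double
point curve of the versal deformation of the submersion `u + v³`), the discriminant
`{(a₁,a₂,t) : ∃ y, ∂H/∂y = 0, t = H(y,a₁,a₂)}` is the union of the plane
`{(a₁, a₂, 0)}` and the set `{(−3y⁴ − 2a₂y², a₂, −2y⁶ − a₂y⁴)}`. -/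
theorem stmt19 (H : ℝ → ℝ → ℝ → ℝ)
    (hH : ∀ y a₁ a₂, H y a₁ a₂ = y ^ 6 + a₁ * y ^ 2 + a₂ * y ^ 4) :
    {p : ℝ × ℝ × ℝ | ∃ y : ℝ,
        deriv (fun y' => H y' p.1 p.2.1) y = 0 ∧ p.2.2 = H y p.1 p.2.1} =
      {p : ℝ × ℝ × ℝ | ∃ a₁ a₂ : ℝ, p = (a₁, a₂, 0)} ∪
      {p : ℝ × ℝ × ℝ | ∃ y a₂ : ℝ,
          p = (-3 * y ^ 4 - 2 * a₂ * y ^ 2, a₂, -2 * y ^ 6 - a₂ * y ^ 4)} := by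
  ext ⟨a₁, a₂, t⟩
  simp only [Set.mem_ofPred_eq, Set.mem_union, hH, deriv_sextic_eq_zero_iff, Prod.mk.injEq]
  constructor
  · rintro ⟨y, rfl | rfl, rfl⟩
    · exact .inl ⟨a₁, a₂, rfl, rfl, by ring⟩
    · exact .inr ⟨y, a₂, rfl, rfl, by ring⟩
  · rintro (⟨_, _, rfl, rfl, rfl⟩ | ⟨y, _, rfl, rfl, rfl⟩)
    · exact ⟨0, .inl rfl, by ring⟩
    · exact ⟨y, .inr rfl, by ring⟩
end
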